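/- arXiv:1710.03487 — 6 statements merged into one kernel-verified Lean document; each statement's English description precedes it below -/
import Mathlib

section
/- Let X be an m×n real matrix, U an m×d matrix with columns u_1,…,u_d, V an n×d matrix with columns v_1,…,v_d, and let r = (r_1,…,r_d) be i.i.d. Bernoulli(θ) random variables with 0 < θ ≤ 1. Then E_r ‖X − (1/θ) U diag(r) Vᵀ‖_F² = ‖X − U Vᵀ‖_F² + ((1−θ)/θ) Σ_{k=1}^d ‖u_k‖₂² ‖v_k‖₂². -/
/-!
Entrywise, `X - θ⁻¹ U diag(r) Vᵀ = (X - U Vᵀ) - ∑ₖ uₖ vₖᵀ zₖ` with the centred noise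
`zₖ = rₖ / θ - 1`. The `zₖ` have mean zero, are pairwise uncorrelated and have second moment
`(1 - θ) / θ`, so the expected square splits, Pythagoras-style, into the deterministic loss plus
`(1 - θ) / θ ∑ₖ (uₖ)ᵢ² (vₖ)ⱼ²`; summing over the entries gives `‖uₖ‖² ‖vₖ‖²`.
-/

open Matrix Finset

theorem sum_mul_sub_sum_mul_sq {Ω ι : Type*} [Fintype Ω] [Fintype ι] (w : Ω → ℝ)
    (hw : ∑ ω, w ω = 1) (z : ι → Ω → ℝ) (hmean : ∀ k, ∑ ω, w ω * z k ω = 0)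
    (horth : ∀ k l, k ≠ l → ∑ ω, w ω * (z k ω * z l ω) = 0) (b : ℝ) (c : ι → ℝ) :
    ∑ ω, w ω * (b - ∑ k, c k * z k ω) ^ 2 = b ^ 2 + ∑ k, c k ^ 2 * ∑ ω, w ω * z k ω ^ 2 := by
  have hlin : ∑ ω, w ω * ∑ k, c k * z k ω = 0 := by
    simp_rw [mul_sum]
    rw [sum_comm]
    refine sum_eq_zero fun k _ => ?_
    simp_rw [mul_left_comm (w _), ← mul_sum, hmean, mul_zero]
  have hquad : ∑ ω, w ω * (∑ k, c k * z k ω) ^ 2 = ∑ k, c k ^ 2 * ∑ ω, w ω * z k ω ^ 2 := by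
    have hcov : ∀ k l, ∑ ω, w ω * (c k * z k ω * (c l * z l ω)) =
        c k * c l * ∑ ω, w ω * (z k ω * z l ω) := fun k l => by
      rw [mul_sum]
      exact sum_congr rfl fun ω _ => by ring
    simp_rw [sq (∑ k, _), sum_mul_sum, mul_sum]
    rw [sum_comm]
    refine sum_congr rfl fun k _ => ?_
    rw [sum_comm, sum_eq_single k (fun l _ hl => by rw [hcov, horth k l (Ne.symm hl), mul_zero])
      (by simp), hcov]
    simp_rw [sq, mul_sum]
  calc ∑ ω, w ω * (b - ∑ k, c k * z k ω) ^ 2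
      = ∑ ω, (b ^ 2 * w ω - 2 * b * (w ω * ∑ k, c k * z k ω)
          + w ω * (∑ k, c k * z k ω) ^ 2) := sum_congr rfl fun ω _ => by ring
    _ = b ^ 2 + ∑ k, c k ^ 2 * ∑ ω, w ω * z k ω ^ 2 := by
      rw [sum_add_distrib, sum_sub_distrib, ← mul_sum, ← mul_sum, hw, hlin, hquad]
      ring

section Bernoulli

variable {ι : Type*} [Fintype ι]

def bernoulliWeight (θ : ℝ) (r : ι → Bool) : ℝ :=
  ∏ k, if r k then θ else 1 - θ

variable [DecidableEq ι]

theorem sum_bernoulliWeight_mul_prod (θ : ℝ) (g : ι → Bool → ℝ) :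
    ∑ r, bernoulliWeight θ r * ∏ k, g k (r k) = ∏ k, (θ * g k true + (1 - θ) * g k false) := by
  have hfactor : ∀ k, θ * g k true + (1 - θ) * g k false =
      ∑ b, (if b then θ else 1 - θ) * g k b := fun k => by simp
  simp_rw [hfactor, Fintype.prod_sum, prod_mul_distrib, bernoulliWeight]

theorem sum_bernoulliWeight (θ : ℝ) : ∑ r : ι → Bool, bernoulliWeight θ r = 1 := by
  simpa using sum_bernoulliWeight_mul_prod θ (fun (_ : ι) _ => (1 : ℝ))

theorem sum_bernoulliWeight_mul_apply_mul_apply (θ : ℝ) {k l : ι} (hkl : k ≠ l)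
    (f g : Bool → ℝ) :
    ∑ r, bernoulliWeight θ r * (f (r k) * g (r l)) =
      (θ * f true + (1 - θ) * f false) * (θ * g true + (1 - θ) * g false) := by
  have h := sum_bernoulliWeight_mul_prod θ
    (fun p b => (if p = k then f b else 1) * (if p = l then g b else 1))
  simp only [prod_mul_distrib, prod_ite_eq', mem_univ, if_true] at h
  rw [h, prod_eq_mul k l hkl (fun p _ hp => by simp [hp.1, hp.2]) (by simp) (by simp)]
  simp [hkl, hkl.symm]

theorem sum_bernoulliWeight_mul_apply (θ : ℝ) (k : ι) (f : Bool → ℝ) :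
    ∑ r, bernoulliWeight θ r * f (r k) = θ * f true + (1 - θ) * f false := by
  have h := sum_bernoulliWeight_mul_prod θ (fun p b => if p = k then f b else 1)
  simp only [prod_ite_eq', mem_univ, if_true] at h
  rw [h, prod_eq_single k (fun p _ hp => by simp [hp]) (by simp)]
  simp

noncomputable def centredDropout (θ : ℝ) (b : Bool) : ℝ :=
  (if b then θ⁻¹ else 0) - 1

theorem sum_bernoulliWeight_mul_sub_sum_sq {θ : ℝ} (hθ : θ ≠ 0) (a : ℝ) (c : ι → ℝ) :
    ∑ r, bernoulliWeight θ r * (a - θ⁻¹ * ∑ k, (if r k then 1 else 0) * c k) ^ 2 =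
      (a - ∑ k, c k) ^ 2 + (1 - θ) / θ * ∑ k, c k ^ 2 := by
  have hmean : θ * centredDropout θ true + (1 - θ) * centredDropout θ false = 0 := by
    simp only [centredDropout, Bool.false_eq_true, if_true, if_false]
    field_simp
    ring
  have hsecond : ∀ k : ι, ∑ r, bernoulliWeight θ r * centredDropout θ (r k) ^ 2 =
      (1 - θ) / θ := fun k => by
    rw [sum_bernoulliWeight_mul_apply θ k (fun b => centredDropout θ b ^ 2)]
    simp only [centredDropout, Bool.false_eq_true, if_true, if_false]
    field_simp
    ring
  have hnoise : ∀ r : ι → Bool, a - θ⁻¹ * ∑ k, (if r k then 1 else 0) * c k =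
      (a - ∑ k, c k) - ∑ k, c k * centredDropout θ (r k) := fun r => by
    simp only [centredDropout, mul_sum, ← sum_add_distrib, sub_sub, sub_right_inj]
    exact sum_congr rfl fun k _ => by split_ifs <;> ring
  simp_rw [hnoise]
  rw [sum_mul_sub_sum_mul_sq _ (sum_bernoulliWeight θ) (fun k r => centredDropout θ (r k))
    (fun k => by rw [sum_bernoulliWeight_mul_apply θ k, hmean])
    (fun k l hkl => by rw [sum_bernoulliWeight_mul_apply_mul_apply θ hkl, hmean, zero_mul])]
  simp_rw [hsecond, ← sum_mul]
  ring

end Bernoulli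

theorem Matrix.mul_diagonal_mul_transpose_apply {R m n d : Type*} [CommSemiring R] [Fintype d]
    [DecidableEq d] (U : Matrix m d R) (D : d → R) (V : Matrix n d R) (i : m) (j : n) :
    (U * diagonal D * Vᵀ) i j = ∑ k, D k * (U i k * V j k) := by
  rw [mul_apply]
  simp only [mul_diagonal, transpose_apply]
  exact sum_congr rfl fun k _ => by ring

theorem sum_sum_sum_mul_sq {R m n d : Type*} [CommSemiring R] [Fintype m] [Fintype n]
    [Fintype d] (U : Matrix m d R) (V : Matrix n d R) :
    ∑ i, ∑ j, ∑ k, (U i k * V j k) ^ 2 = ∑ k, (∑ i, U i k ^ 2) * ∑ j, V j k ^ 2 := by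
  simp_rw [sum_mul_sum, mul_pow]
  exact (sum_congr rfl fun _ _ => sum_comm).trans sum_comm

theorem dropout_expectation_eq_general {m n d : ℕ} (θ : ℝ) (hθ0 : 0 < θ)
    (X : Matrix (Fin m) (Fin n) ℝ) (U : Matrix (Fin m) (Fin d) ℝ)
    (V : Matrix (Fin n) (Fin d) ℝ) :
    (∑ r : Fin d → Bool,
        (∏ k, if r k then θ else 1 - θ) *
          ∑ i, ∑ j,
            ((X - (1 / θ) •
                (U * Matrix.diagonal (fun k => if r k then (1 : ℝ) else 0) * Vᵀ)) i j) ^ 2) =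
      (∑ i, ∑ j, ((X - U * Vᵀ) i j) ^ 2) +
        ((1 - θ) / θ) * ∑ k, (∑ i, (U i k) ^ 2) * (∑ j, (V j k) ^ 2) := by
  have hentry : ∀ (r : Fin d → Bool) i j,
      (X - (1 / θ) • (U * diagonal (fun k => if r k then (1 : ℝ) else 0) * Vᵀ)) i j =
        X i j - θ⁻¹ * ∑ k, (if r k then 1 else 0) * (U i k * V j k) := fun r i j => by
    rw [Matrix.sub_apply, Matrix.smul_apply, mul_diagonal_mul_transpose_apply, smul_eq_mul,
      one_div]
  calc _ = ∑ i, ∑ j, ∑ r, bernoulliWeight θ r *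
        (X i j - θ⁻¹ * ∑ k, (if r k then 1 else 0) * (U i k * V j k)) ^ 2 := by
        simp_rw [hentry, mul_sum, bernoulliWeight]
        rw [sum_comm]
        exact sum_congr rfl fun _ _ => sum_comm
    _ = ∑ i, ∑ j, ((X i j - ∑ k, U i k * V j k) ^ 2 +
          (1 - θ) / θ * ∑ k, (U i k * V j k) ^ 2) := by
        simp_rw [sum_bernoulliWeight_mul_sub_sum_sq hθ0.ne']
    _ = _ := by
        simp_rw [sum_add_distrib, ← mul_sum, sum_sum_sum_mul_sq, Matrix.sub_apply, mul_apply,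
          transpose_apply]

/-- Dropout criterion for matrix factorization: the expected squared Frobenius loss
under i.i.d. Bernoulli(θ) dropout of the columns equals the deterministic loss plus
the regularizer `((1-θ)/θ) Σ_k ‖u_k‖² ‖v_k‖²`.  The expectation over the Bernoulli
vector `r` is written as a weighted sum over all `r : Fin d → Bool`. -/
theorem dropout_expectation_eq {m n d : ℕ} (θ : ℝ) (hθ0 : 0 < θ) (hθ1 : θ ≤ 1)
    (X : Matrix (Fin m) (Fin n) ℝ) (U : Matrix (Fin m) (Fin d) ℝ)
    (V : Matrix (Fin n) (Fin d) ℝ) :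
    (∑ r : Fin d → Bool,
        (∏ k, if r k then θ else 1 - θ) *
          ∑ i, ∑ j,
            ((X - (1 / θ) •
                (U * Matrix.diagonal (fun k => if r k then (1 : ℝ) else 0) * Vᵀ)) i j) ^ 2) =
      (∑ i, ∑ j, ((X - U * Vᵀ) i j) ^ 2) +
        ((1 - θ) / θ) * ∑ k, (∑ i, (U i k) ^ 2) * (∑ j, (V j k) ^ 2) :=
  dropout_expectation_eq_general θ hθ0 X U V
end

section
/- Let x_1 ≥ x_2 ≥ … ≥ x_r > 0 and λ > 0. Then any global minimizer a ∈ ℝ^r of the function a ↦ ‖a − x‖₂² + λ ‖a‖₁² has all nonnegative coordinates. -/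
/-! Flipping the sign of a negative coordinate `aᵢ` leaves `‖a‖₁` unchanged but moves `aᵢ`
to the same side of `0` as `xᵢ > 0`, strictly decreasing `‖a - x‖₂²` by `4 |aᵢ| xᵢ`. -/

open Finset Function

theorem Fintype.sum_apply_update {ι α M : Type*} [Fintype ι] [DecidableEq ι] [AddCommGroup M]
    (g : ι → α → M) (a : ι → α) (i : ι) (c : α) :
    ∑ j, g j (update a i c j) = ∑ j, g j (a j) + (g i c - g i (a i)) := by
  simp only [apply_update g a i c, sum_update_of_mem (mem_univ i)]
  rw [← add_sum_erase _ _ (mem_univ i), sdiff_singleton_eq_erase]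
  abel

theorem minimizer_nonneg_general {r : ℕ} (x : Fin r → ℝ) (lam : ℝ)
    (hpos : ∀ i, 0 < x i)
    (a : Fin r → ℝ)
    (hmin : ∀ b : Fin r → ℝ,
      (∑ i, (a i - x i) ^ 2) + lam * (∑ i, |a i|) ^ 2 ≤
        (∑ i, (b i - x i) ^ 2) + lam * (∑ i, |b i|) ^ 2) :
    ∀ i, 0 ≤ a i := by
  intro i
  by_contra! hneg
  have hflip := hmin (update a i (-a i))
  rw [Fintype.sum_apply_update (fun j t => (t - x j) ^ 2),
    Fintype.sum_apply_update (fun _ t => |t|), abs_neg, sub_self, add_zero] at hflip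
  nlinarith [mul_pos (neg_pos.mpr hneg) (hpos i)]

/-- Any global minimizer of `a ↦ ‖a - x‖₂² + λ ‖a‖₁²`, where `x` has positive
nonincreasing entries and `λ > 0`, has all nonnegative coordinates. -/
theorem minimizer_nonneg {r : ℕ} (x : Fin r → ℝ) (lam : ℝ) (hlam : 0 < lam)
    (hpos : ∀ i, 0 < x i) (hmono : ∀ i j : Fin r, i ≤ j → x j ≤ x i)
    (a : Fin r → ℝ)
    (hmin : ∀ b : Fin r → ℝ,
      (∑ i, (a i - x i) ^ 2) + lam * (∑ i, |a i|) ^ 2 ≤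
        (∑ i, (b i - x i) ^ 2) + lam * (∑ i, |b i|) ^ 2) :
    ∀ i, 0 ≤ a i :=
  minimizer_nonneg_general x lam hpos a hmin
end

section
/- Let x_1 ≥ x_2 ≥ … ≥ x_r > 0, λ > 0, and let μ_k = (1/k) Σ_{i=1}^k x_i. Let d be the largest integer 1 ≤ d ≤ r such that x_d − (λd/(1+λd)) μ_d > 0. Then the unique minimizer of a ↦ ‖a − x‖₂² + λ‖a‖₁² over ℝ^r is the vector a with a_i = x_i − (λd/(1+λd)) μ_d for i ≤ d and a_i = 0 for i > d. -/
/-!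
Put `t = λ‖a‖₁`. The vector `a` satisfies the optimality condition `x - a ∈ t · ∂‖·‖₁(a)`:
on its support, the first `d` coordinates, `x_i - a_i = t`, and off it `0 < x_i ≤ t`, which is
exactly the maximality of `d`. Since `s ↦ λ s²` is convex with slope `2t` at `s = ‖a‖₁`, this
gives `F b ≥ F a + ‖b - a‖₂²` for the objective `F`, so `a` is the unique minimizer.
-/

open Finset

section Objective

variable {ι : Type*} [Fintype ι]

def sqL1Objective (x : ι → ℝ) (lam : ℝ) (b : ι → ℝ) : ℝ :=
  ∑ i, (b i - x i) ^ 2 + lam * (∑ i, |b i|) ^ 2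

theorem sqL1Objective_add_sum_sq_le {x a : ι → ℝ} {lam t : ℝ} (hlam : 0 ≤ lam)
    (ht : lam * ∑ i, |a i| = t)
    (hsub : ∀ i (c : ℝ), (x i - a i) * (c - a i) ≤ t * (|c| - |a i|)) (b : ι → ℝ) :
    sqL1Objective x lam a + ∑ i, (b i - a i) ^ 2 ≤ sqL1Objective x lam b := by
  have hlin : ∑ i, (x i - a i) * (b i - a i) ≤ t * (∑ i, |b i| - ∑ i, |a i|) := by
    rw [← sum_sub_distrib, mul_sum]
    exact sum_le_sum fun i _ => hsub i (b i)
  have hsq : ∑ i, (b i - x i) ^ 2 =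
      ∑ i, (a i - x i) ^ 2 + ∑ i, (b i - a i) ^ 2 - 2 * ∑ i, (x i - a i) * (b i - a i) := by
    rw [mul_sum, ← sum_add_distrib, ← sum_sub_distrib]
    exact sum_congr rfl fun i _ => by ring
  rw [← ht] at hlin
  rw [sqL1Objective, sqL1Objective, hsq]
  nlinarith [mul_nonneg hlam (sq_nonneg (∑ i, |b i| - ∑ i, |a i|))]

theorem forall_le_and_unique_of_add_sum_sq_le {F : (ι → ℝ) → ℝ} {a : ι → ℝ}
    (h : ∀ b, F a + ∑ i, (b i - a i) ^ 2 ≤ F b) :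
    (∀ b, F a ≤ F b) ∧ ∀ b, (∀ c, F b ≤ F c) → b = a := by
  have hnonneg (b : ι → ℝ) : ∀ i ∈ univ, 0 ≤ (b i - a i) ^ 2 := fun i _ => sq_nonneg _
  refine ⟨fun b => le_of_add_le_of_nonneg_left (h b) (sum_nonneg (hnonneg b)), fun b hb => ?_⟩
  have hzero : ∑ i, (b i - a i) ^ 2 = 0 :=
    le_antisymm (by linarith [h b, hb a]) (sum_nonneg (hnonneg b))
  funext i
  simpa [sub_eq_zero] using (sum_eq_zero_iff_of_nonneg (hnonneg b)).1 hzero i (mem_univ i)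

end Objective

theorem mul_sub_le_mul_abs_sub_of_pos {t a c : ℝ} (ht : 0 ≤ t) (ha : 0 < a) :
    t * (c - a) ≤ t * (|c| - |a|) := by
  rw [abs_of_pos ha]
  exact mul_le_mul_of_nonneg_left (by linarith [le_abs_self c]) ht

theorem mul_le_mul_abs_of_abs_le {y t c : ℝ} (hy : |y| ≤ t) : y * c ≤ t * |c| :=
  calc y * c ≤ |y| * |c| := by rw [← abs_mul]; exact le_abs_self _
    _ ≤ t * |c| := mul_le_mul_of_nonneg_right hy (abs_nonneg c)

theorem le_mul_div_of_le_succ_mul_div {lam k μ y : ℝ} (hlam : 0 ≤ lam) (hk : 0 ≤ k)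
    (h : y ≤ lam * (k + 1) / (1 + lam * (k + 1)) * ((k * μ + y) / (k + 1))) :
    y ≤ lam * k / (1 + lam * k) * μ := by
  have hk1 : 0 < 1 + lam * (k + 1) := by positivity
  have hk0 : 0 < 1 + lam * k := by positivity
  rw [show lam * (k + 1) / (1 + lam * (k + 1)) * ((k * μ + y) / (k + 1))
      = lam * (k * μ + y) / (1 + lam * (k + 1)) by field_simp, le_div_iff₀ hk1] at h
  rw [div_mul_eq_mul_div, le_div_iff₀ hk0]
  linarith

section PrefixMean

variable {r : ℕ} (x : Fin r → ℝ)

noncomputable def prefixMean (k : ℕ) : ℝ := (∑ i with i.1 < k, x i) / k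

noncomputable def threshold (lam : ℝ) (k : ℕ) : ℝ := lam * k / (1 + lam * k) * prefixMean x k

variable {x}

theorem natCast_mul_prefixMean (k : ℕ) : (k : ℝ) * prefixMean x k = ∑ i with i.1 < k, x i := by
  rcases Nat.eq_zero_or_pos k with rfl | hk
  · simp
  · rw [prefixMean]; field_simp

theorem sum_filter_val_lt_succ {M : Type*} [AddCommMonoid M] {k : ℕ} (f : Fin r → M)
    (hk : k < r) : ∑ i with i.1 < k + 1, f i = ∑ i with i.1 < k, f i + f ⟨k, hk⟩ := by
  have hinsert : univ.filter (fun i : Fin r => i.1 < k + 1) =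
      insert ⟨k, hk⟩ (univ.filter fun i : Fin r => i.1 < k) := by
    ext i
    simp only [mem_filter, mem_univ, true_and, mem_insert, Fin.ext_iff]
    omega
  rw [hinsert, sum_insert (by simp), add_comm]

theorem prefixMean_succ {k : ℕ} (hk : k < r) :
    prefixMean x (k + 1) = (k * prefixMean x k + x ⟨k, hk⟩) / (k + 1) := by
  rw [natCast_mul_prefixMean, ← sum_filter_val_lt_succ x hk, prefixMean]
  push_cast
  rfl

theorem threshold_nonneg {lam : ℝ} (hlam : 0 ≤ lam) (hx : ∀ i, 0 ≤ x i) (k : ℕ) :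
    0 ≤ threshold x lam k :=
  mul_nonneg (by positivity) (div_nonneg (sum_nonneg fun i _ => hx i) k.cast_nonneg)

theorem le_threshold_of_le_threshold_succ {lam : ℝ} (hlam : 0 ≤ lam) {k : ℕ} (hk : k < r)
    (h : x ⟨k, hk⟩ ≤ threshold x lam (k + 1)) : x ⟨k, hk⟩ ≤ threshold x lam k := by
  rw [threshold, prefixMean_succ hk] at h
  push_cast at h
  exact le_mul_div_of_le_succ_mul_div hlam k.cast_nonneg h

theorem lam_mul_sum_sub_threshold {lam : ℝ} (hlam : 0 ≤ lam) {k : ℕ} (hk : k ≤ r) :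
    lam * ∑ i with i.1 < k, (x i - threshold x lam k) = threshold x lam k := by
  have hcard : #({i | i.1 < k} : Finset (Fin r)) = k := by
    rw [Fin.card_filter_val_lt, min_eq_right hk]
  have hk0 : 0 < 1 + lam * k := by positivity
  rw [sum_sub_distrib, sum_const, hcard, nsmul_eq_mul, ← natCast_mul_prefixMean, threshold]
  field_simp
  ring

end PrefixMean

/-- Closed-form for the unique minimizer of `a ↦ ‖a - x‖₂² + λ‖a‖₁²`:
with `μ_k` the average of the first `k` entries of `x` and `d` the largest integer
`1 ≤ d ≤ r` such that `x_d - (λd/(1+λd)) μ_d > 0`, the unique minimizer is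
`a_i = x_i - (λd/(1+λd)) μ_d` for `i ≤ d` and `a_i = 0` for `i > d`. -/
theorem minimizer_closed_form {r : ℕ} (x : Fin r → ℝ) (lam : ℝ) (hlam : 0 < lam)
    (hpos : ∀ i, 0 < x i) (hmono : ∀ i j : Fin r, i ≤ j → x j ≤ x i)
    (μ : ℕ → ℝ)
    (hμ : ∀ k : ℕ, μ k = (∑ i ∈ univ.filter fun i : Fin r => i.1 < k, x i) / k)
    (d : ℕ) (hd1 : 1 ≤ d) (hd2 : d ≤ r)
    (hcond : 0 < x ⟨d - 1, by omega⟩ - lam * d / (1 + lam * d) * μ d)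
    (hmax : ∀ e : ℕ, d < e → (he : e ≤ r) →
      ¬ (0 < x ⟨e - 1, by omega⟩ - lam * e / (1 + lam * e) * μ e))
    (a : Fin r → ℝ)
    (ha : a = fun i : Fin r => if i.1 < d then x i - lam * d / (1 + lam * d) * μ d else 0) :
    (∀ b : Fin r → ℝ,
        (∑ i, (a i - x i) ^ 2) + lam * (∑ i, |a i|) ^ 2 ≤
          (∑ i, (b i - x i) ^ 2) + lam * (∑ i, |b i|) ^ 2) ∧
      ∀ b : Fin r → ℝ,
        (∀ c : Fin r → ℝ,
            (∑ i, (b i - x i) ^ 2) + lam * (∑ i, |b i|) ^ 2 ≤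
              (∑ i, (c i - x i) ^ 2) + lam * (∑ i, |c i|) ^ 2) →
          b = a := by
  obtain rfl : μ = prefixMean x := funext hμ
  change 0 < x _ - threshold x lam d at hcond
  change a = fun i => if i.1 < d then x i - threshold x lam d else 0 at ha
  subst ha
  have ht : 0 ≤ threshold x lam d := threshold_nonneg hlam.le (fun i => (hpos i).le) d
  have hhead (i : Fin r) (hi : i.1 < d) : threshold x lam d < x i := by
    linarith [hmono i ⟨d - 1, by omega⟩ (Fin.le_def.2 (show i.1 ≤ d - 1 by omega))]
  have htail (i : Fin r) (hi : d ≤ i.1) : x i ≤ threshold x lam d :=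
    (hmono ⟨d, by omega⟩ i hi).trans <| le_threshold_of_le_threshold_succ hlam.le (by omega) <|
      sub_nonpos.1 <| not_lt.1 (hmax (d + 1) (by omega) (by omega))
  refine forall_le_and_unique_of_add_sum_sq_le (F := sqL1Objective x lam) <|
    sqL1Objective_add_sum_sq_le (t := threshold x lam d) hlam.le ?_ fun i c => ?_
  · refine (congrArg (lam * ·) ?_).trans (lam_mul_sum_sub_threshold hlam.le hd2)
    rw [sum_filter]
    refine sum_congr rfl fun i _ => ?_
    split_ifs with hi
    exacts [abs_of_pos (sub_pos.2 (hhead i hi)), abs_zero]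
  · split_ifs with hi
    · rw [sub_sub_cancel]
      exact mul_sub_le_mul_abs_sub_of_pos ht (sub_pos.2 (hhead i hi))
    · simpa using mul_le_mul_abs_of_abs_le
        ((abs_of_pos (hpos i)).trans_le (htail i (not_lt.1 hi))) (c := c)
end

section
/- Let λ > 0 and suppose a ∈ ℝ^r minimizes a ↦ ‖a − x‖₂² + λ‖a‖₁² where all x_i > 0. If exactly the first k coordinates of a are nonzero (and positive), then ‖a‖₁ = (k/(1+λk)) μ_k, where μ_k is the average of x_1,…,x_k, and a_i = x_i − (λk/(1+λk)) μ_k for i = 1,…,k. -/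
/-!
Where `a i > 0`, moving the `i`-th coordinate by a small `t` changes the objective by the
quadratic `2 (a i - x i + λ‖a‖₁) t + (1 + λ) t²`, since `‖a‖₁` grows by exactly `t`.
Minimality kills the linear coefficient, so `a i = x i - λ‖a‖₁` on the support; summing this over
the `k` support coordinates gives `(1 + λk)‖a‖₁ = k μ_k`.
-/

open Finset Function

theorem Finset.sum_apply_update_sub {ι α M : Type*} [Fintype ι] [DecidableEq ι] [AddCommGroup M]
    (g : ι → α → M) (a : ι → α) (i : ι) (v : α) :
    ∑ j, g j (update a i v j) - ∑ j, g j (a j) = g i v - g i (a i) := by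
  rw [← add_sum_erase _ _ (mem_univ i), ← add_sum_erase _ (fun j => g j (a j)) (mem_univ i),
    update_self, sum_congr rfl fun j hj => by rw [update_of_ne (ne_of_mem_erase hj)]]
  abel

theorem linear_coeff_eq_zero_of_isLocalMin {b c : ℝ}
    (h : IsLocalMin (fun t : ℝ => b * t + c * t ^ 2) 0) : b = 0 := by
  have hderiv : HasDerivAt (fun t : ℝ => b * t + c * t ^ 2) (b * 1 + c * (2 * 0 ^ 1)) 0 :=
    ((hasDerivAt_id' 0).const_mul b).fun_add ((hasDerivAt_pow 2 0).const_mul c)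
  simpa using h.hasDerivAt_eq_zero hderiv

section

variable {ι : Type*} [Fintype ι]

def squaredL1Objective (x : ι → ℝ) (lam : ℝ) (b : ι → ℝ) : ℝ :=
  ∑ i, (b i - x i) ^ 2 + lam * (∑ i, |b i|) ^ 2

theorem squaredL1Objective_update_add [DecidableEq ι] (x : ι → ℝ) (lam : ℝ) {a : ι → ℝ} {i : ι}
    {t : ℝ} (hai : 0 ≤ a i) (hait : 0 ≤ a i + t) :
    squaredL1Objective x lam (update a i (a i + t)) =
      squaredL1Objective x lam a + 2 * (a i - x i + lam * ∑ j, |a j|) * t + (1 + lam) * t ^ 2 := by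
  have hsq := sum_apply_update_sub (fun j s => (s - x j) ^ 2) a i (a i + t)
  have habs := sum_apply_update_sub (fun _ s => |s|) a i (a i + t)
  simp only [abs_of_nonneg hai, abs_of_nonneg hait] at habs
  unfold squaredL1Objective
  linear_combination hsq + lam * (∑ j, |update a i (a i + t) j| + ∑ j, |a j| + t) * habs

variable {x a : ι → ℝ} {lam : ℝ}

theorem apply_eq_sub_of_forall_squaredL1Objective_le
    (hmin : ∀ b, squaredL1Objective x lam a ≤ squaredL1Objective x lam b) {i : ι}
    (hai : 0 < a i) :
    a i = x i - lam * ∑ j, |a j| := by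
  classical
  set B := a i - x i + lam * ∑ j, |a j|
  have hlocal : IsLocalMin (fun t : ℝ => 2 * B * t + (1 + lam) * t ^ 2) 0 := by
    filter_upwards [Ioi_mem_nhds (neg_lt_zero.mpr hai)] with t (ht : -a i < t)
    have h := hmin (update a i (a i + t))
    rw [squaredL1Objective_update_add x lam hai.le (by linarith)] at h
    linarith
  linarith [linear_coeff_eq_zero_of_isLocalMin hlocal]

theorem one_add_mul_card_mul_sum_abs_eq_of_forall_squaredL1Objective_le
    (hmin : ∀ b, squaredL1Objective x lam a ≤ squaredL1Objective x lam b) {s : Finset ι}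
    (hzero : ∀ i ∉ s, a i = 0) (hpos : ∀ i ∈ s, 0 < a i) :
    (1 + lam * #s) * ∑ i, |a i| = ∑ i ∈ s, x i := by
  set S := ∑ i, |a i|
  have hS : S = ∑ i ∈ s, (x i - lam * S) := calc
    S = ∑ i ∈ s, |a i| :=
      (sum_subset (subset_univ s) fun i _ hi => by rw [hzero i hi, abs_zero]).symm
    _ = ∑ i ∈ s, (x i - lam * S) := sum_congr rfl fun i hi => by
      rw [abs_of_pos (hpos i hi), apply_eq_sub_of_forall_squaredL1Objective_le hmin (hpos i hi)]
  rw [sum_sub_distrib, sum_const, nsmul_eq_mul] at hS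
  linarith

end

theorem minimizer_support_values_general {r : ℕ} (x : Fin r → ℝ) (lam : ℝ) (hlam : 0 < lam)
    (a : Fin r → ℝ)
    (hmin : ∀ b : Fin r → ℝ,
      (∑ i, (a i - x i) ^ 2) + lam * (∑ i, |a i|) ^ 2 ≤
        (∑ i, (b i - x i) ^ 2) + lam * (∑ i, |b i|) ^ 2)
    (k : ℕ) (hk1 : 1 ≤ k) (hkr : k ≤ r)
    (hsupp : ∀ i : Fin r, a i ≠ 0 ↔ i.1 < k)
    (hsign : ∀ i : Fin r, i.1 < k → 0 < a i)
    (μ : ℕ → ℝ)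
    (hμ : ∀ j : ℕ, μ j = (∑ i ∈ univ.filter fun i : Fin r => i.1 < j, x i) / j) :
    (∑ i, |a i|) = (k : ℝ) / (1 + lam * k) * μ k ∧
      ∀ i : Fin r, i.1 < k → a i = x i - lam * k / (1 + lam * k) * μ k := by
  set s := univ.filter fun i : Fin r => i.1 < k
  have hcard : #s = k := by rw [Fin.card_filter_val_lt, min_eq_right hkr]
  have hxsum : ∑ i ∈ s, x i = k * μ k := by
    rw [hμ, mul_div_cancel₀ _ (by positivity)]
  have hbalance := one_add_mul_card_mul_sum_abs_eq_of_forall_squaredL1Objective_le hmin (s := s)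
    (fun i hi => not_not.mp (mt (hsupp i).mp (by simpa [s] using hi)))
    (fun i hi => hsign i (mem_filter.mp hi).2)
  rw [hcard, hxsum] at hbalance
  have hS : ∑ i, |a i| = k / (1 + lam * k) * μ k := by
    rw [div_mul_eq_mul_div, eq_div_iff (by positivity)]
    linarith
  refine ⟨hS, fun i hi => ?_⟩
  rw [apply_eq_sub_of_forall_squaredL1Objective_le hmin (hsign i hi), hS]
  ring

/-- If `a` minimizes `a ↦ ‖a - x‖₂² + λ‖a‖₁²` (`x` with positive entries, `λ > 0`)
and exactly the first `k` coordinates of `a` are nonzero (and positive), then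
`‖a‖₁ = (k/(1+λk)) μ_k` and `a_i = x_i - (λk/(1+λk)) μ_k` for `i = 1,…,k`,
where `μ_k` is the average of `x_1,…,x_k`. -/
theorem minimizer_support_values {r : ℕ} (x : Fin r → ℝ) (lam : ℝ) (hlam : 0 < lam)
    (hpos : ∀ i, 0 < x i)
    (a : Fin r → ℝ)
    (hmin : ∀ b : Fin r → ℝ,
      (∑ i, (a i - x i) ^ 2) + lam * (∑ i, |a i|) ^ 2 ≤
        (∑ i, (b i - x i) ^ 2) + lam * (∑ i, |b i|) ^ 2)
    (k : ℕ) (hk1 : 1 ≤ k) (hkr : k ≤ r)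
    (hsupp : ∀ i : Fin r, a i ≠ 0 ↔ i.1 < k)
    (hsign : ∀ i : Fin r, i.1 < k → 0 < a i)
    (μ : ℕ → ℝ)
    (hμ : ∀ j : ℕ, μ j = (∑ i ∈ univ.filter fun i : Fin r => i.1 < j, x i) / j) :
    (∑ i, |a i|) = (k : ℝ) / (1 + lam * k) * μ k ∧
      ∀ i : Fin r, i.1 < k → a i = x i - lam * k / (1 + lam * k) * μ k :=
  minimizer_support_values_general x lam hlam a hmin k hk1 hkr hsupp hsign μ hμ
end

section
/- For a positive real θ̄ < 1, the Fenchel conjugate of the function Θ(X) = (1/2)‖X‖_△², where ‖X‖_△² = inf over d ≥ rank(X) and factorizations UVᵀ = X of (d(1−θ̄)/θ̄) Σ_{k=1}^d ‖u_k‖₂²‖v_k‖₂², is Θ*(Q) = (θ̄/(1−θ̄)) · σ_max(Q)²/2, where σ_max(Q) is the largest singular value of Q. -/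
/-!
Write `c = (1 - θ̄) / θ̄` and `σ = σ_max(Q)`. For a factorization `X = Σ_{k ≤ d} u_k v_kᵀ`,
`⟨Q, X⟩ = Σ_k u_kᵀ Q v_k ≤ σ Σ_k ‖u_k‖ ‖v_k‖`, and AM-GM on each term with weight `c d` gives
`⟨Q, X⟩ ≤ σ² / 2c + (c d / 2) Σ_k ‖u_k‖² ‖v_k‖²`; taking the infimum, `⟨Q, X⟩ - Θ(X) ≤ σ² / 2c`.
Conversely, for unit vectors `u, v` with `s = uᵀ Q v`, the rank-one matrix `(s / c) u vᵀ` gives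
`⟨Q, X⟩ - Θ(X) ≥ s² / 2c`, and `s` can be taken arbitrarily close to `σ`.
-/

open Matrix

/-- `‖X‖_△²`: the infimum over `d ≥ rank X` and factorizations `U Vᵀ = X` of
`(d(1-θ̄)/θ̄) Σ_k ‖u_k‖² ‖v_k‖²`. -/
noncomputable def triNormSq (θb : ℝ) {m n : ℕ} (X : Matrix (Fin m) (Fin n) ℝ) : ℝ :=
  sInf {t : ℝ | ∃ (d : ℕ) (U : Matrix (Fin m) (Fin d) ℝ) (V : Matrix (Fin n) (Fin d) ℝ),
    X.rank ≤ d ∧ U * Vᵀ = X ∧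
    t = ((d : ℝ) * (1 - θb) / θb) * ∑ k, (∑ i, (U i k) ^ 2) * (∑ j, (V j k) ^ 2)}

/-- The spectral norm (largest singular value) of `Q`, characterized as
`σ_max(Q) = sup { uᵀ Q v : ‖u‖₂ ≤ 1, ‖v‖₂ ≤ 1 }`. -/
noncomputable def sigmaMax {m n : ℕ} (Q : Matrix (Fin m) (Fin n) ℝ) : ℝ :=
  sSup {t : ℝ | ∃ (u : Fin m → ℝ) (v : Fin n → ℝ),
    (∑ i, (u i) ^ 2) ≤ 1 ∧ (∑ j, (v j) ^ 2) ≤ 1 ∧ t = ∑ i, ∑ j, u i * Q i j * v j}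

/-- The Fenchel conjugate of a function on `m × n` matrices with respect to the
Frobenius (trace) inner product. -/
noncomputable def fenchel {m n : ℕ} (f : Matrix (Fin m) (Fin n) ℝ → ℝ)
    (Q : Matrix (Fin m) (Fin n) ℝ) : ℝ :=
  sSup {t : ℝ | ∃ X : Matrix (Fin m) (Fin n) ℝ,
    t = (∑ i, ∑ j, Q i j * X i j) - f X}

lemma abs_le_one_of_sum_sq_le_one {ι : Type*} [Fintype ι] {u : ι → ℝ}
    (hu : ∑ i, u i ^ 2 ≤ 1) (i : ι) : |u i| ≤ 1 :=
  (sq_le_one_iff_abs_le_one _).1 <|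
    (Finset.single_le_sum (fun k _ => sq_nonneg (u k)) (Finset.mem_univ i)).trans hu

lemma sum_sq_div_sqrt_sum_sq {ι : Type*} [Fintype ι] {u : ι → ℝ} (hu : 0 < ∑ i, u i ^ 2) :
    ∑ i, (u i / √(∑ i, u i ^ 2)) ^ 2 = 1 := by
  simp only [div_pow, ← Finset.sum_div, Real.sq_sqrt hu.le, div_self hu.ne']

lemma eq_zero_of_sum_sq_nonpos {ι : Type*} [Fintype ι] {u : ι → ℝ}
    (hu : ∑ i, u i ^ 2 ≤ 0) : u = 0 := by
  funext i
  have := (Finset.single_le_sum (fun k _ => sq_nonneg (u k)) (Finset.mem_univ i)).trans hu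
  exact pow_eq_zero_iff two_ne_zero |>.1 (le_antisymm this (sq_nonneg _))

lemma frobenius_mul_transpose {ι κ δ R : Type*} [Fintype ι] [Fintype κ] [Fintype δ]
    [CommSemiring R] (Q : Matrix ι κ R) (U : Matrix ι δ R) (V : Matrix κ δ R) :
    ∑ i, ∑ j, Q i j * (U * Vᵀ) i j = ∑ k, ∑ i, ∑ j, U i k * Q i j * V j k := by
  simp only [mul_apply, transpose_apply, Finset.mul_sum]
  conv_lhs => enter [2, i]; rw [Finset.sum_comm]
  rw [Finset.sum_comm]
  exact Fintype.sum_congr _ _ fun k => Fintype.sum_congr _ _ fun i => Fintype.sum_congr _ _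
    fun j => by ring

section sigmaMax

variable {m n : ℕ} (Q : Matrix (Fin m) (Fin n) ℝ)

lemma bddAbove_sigmaMax_set : BddAbove {t : ℝ | ∃ (u : Fin m → ℝ) (v : Fin n → ℝ),
    (∑ i, (u i) ^ 2) ≤ 1 ∧ (∑ j, (v j) ^ 2) ≤ 1 ∧ t = ∑ i, ∑ j, u i * Q i j * v j} := by
  refine ⟨∑ i, ∑ j, |Q i j|, ?_⟩
  rintro t ⟨u, v, hu, hv, rfl⟩
  gcongr with i _ j _
  calc u i * Q i j * v j ≤ |u i| * |Q i j| * |v j| := by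
        rw [← abs_mul, ← abs_mul]; exact le_abs_self _
    _ ≤ 1 * |Q i j| * 1 := by
        gcongr
        exacts [abs_le_one_of_sum_sq_le_one hu i, abs_le_one_of_sum_sq_le_one hv j]
    _ = |Q i j| := by ring

lemma le_sigmaMax {u : Fin m → ℝ} {v : Fin n → ℝ} (hu : ∑ i, u i ^ 2 ≤ 1)
    (hv : ∑ j, v j ^ 2 ≤ 1) : ∑ i, ∑ j, u i * Q i j * v j ≤ sigmaMax Q :=
  le_csSup (bddAbove_sigmaMax_set Q) ⟨u, v, hu, hv, rfl⟩

lemma sigmaMax_le {b : ℝ} (h : ∀ (u : Fin m → ℝ) (v : Fin n → ℝ), ∑ i, u i ^ 2 ≤ 1 →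
    ∑ j, v j ^ 2 ≤ 1 → ∑ i, ∑ j, u i * Q i j * v j ≤ b) : sigmaMax Q ≤ b :=
  csSup_le ⟨0, 0, 0, by simp, by simp, by simp⟩ <| by
    rintro t ⟨u, v, hu, hv, rfl⟩
    exact h u v hu hv

lemma sigmaMax_nonneg : 0 ≤ sigmaMax Q := by
  simpa using le_sigmaMax Q (u := 0) (v := 0) (by simp) (by simp)

lemma bilin_le_sigmaMax_mul_sqrt (u : Fin m → ℝ) (v : Fin n → ℝ) :
    ∑ i, ∑ j, u i * Q i j * v j ≤
      sigmaMax Q * √(∑ i, u i ^ 2) * √(∑ j, v j ^ 2) := by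
  rcases le_or_gt (∑ i, u i ^ 2) 0 with hu | hu
  · simp [eq_zero_of_sum_sq_nonpos hu]
  rcases le_or_gt (∑ j, v j ^ 2) 0 with hv | hv
  · simp [eq_zero_of_sum_sq_nonpos hv]
  set a := √(∑ i, u i ^ 2)
  set b := √(∑ j, v j ^ 2)
  have hab : 0 < a * b := by positivity
  have hunit := le_sigmaMax Q (sum_sq_div_sqrt_sum_sq hu).le (sum_sq_div_sqrt_sum_sq hv).le
  have hscale : ∑ i, ∑ j, u i / a * Q i j * (v j / b) = (∑ i, ∑ j, u i * Q i j * v j) / (a * b) := by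
    simp only [Finset.sum_div]
    exact Fintype.sum_congr _ _ fun i => Fintype.sum_congr _ _ fun j => by ring
  rw [hscale, div_le_iff₀ hab] at hunit
  linarith

end sigmaMax

section fenchel

variable {m n : ℕ} {f : Matrix (Fin m) (Fin n) ℝ → ℝ} {Q : Matrix (Fin m) (Fin n) ℝ} {b : ℝ}

lemma fenchel_le (h : ∀ X, ∑ i, ∑ j, Q i j * X i j - f X ≤ b) : fenchel f Q ≤ b :=
  csSup_le ⟨_, 0, rfl⟩ <| by
    rintro t ⟨X, rfl⟩
    exact h X

lemma le_fenchel (h : ∀ X, ∑ i, ∑ j, Q i j * X i j - f X ≤ b) (X : Matrix (Fin m) (Fin n) ℝ) :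
    ∑ i, ∑ j, Q i j * X i j - f X ≤ fenchel f Q :=
  le_csSup ⟨b, by rintro t ⟨X, rfl⟩; exact h X⟩ ⟨X, rfl⟩

end fenchel

section triNormSq

variable {θb : ℝ} {m n : ℕ}

lemma triNormSq_mul_transpose_le (h0 : 0 ≤ θb) (h1 : θb ≤ 1) {d : ℕ}
    (U : Matrix (Fin m) (Fin d) ℝ) (V : Matrix (Fin n) (Fin d) ℝ) :
    triNormSq θb (U * Vᵀ) ≤
      ((d : ℝ) * (1 - θb) / θb) * ∑ k, (∑ i, (U i k) ^ 2) * (∑ j, (V j k) ^ 2) := by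
  have h1' : 0 ≤ 1 - θb := by linarith
  refine csInf_le ⟨0, ?_⟩ ⟨d, U, V, ?_, rfl, rfl⟩
  · rintro t ⟨d, U, V, -, -, rfl⟩
    positivity
  · simpa using (rank_mul_le_left U Vᵀ).trans (rank_le_width U)

lemma le_triNormSq {X : Matrix (Fin m) (Fin n) ℝ} {r : ℝ}
    (h : ∀ (d : ℕ) (U : Matrix (Fin m) (Fin d) ℝ) (V : Matrix (Fin n) (Fin d) ℝ), U * Vᵀ = X →
      r ≤ ((d : ℝ) * (1 - θb) / θb) * ∑ k, (∑ i, (U i k) ^ 2) * (∑ j, (V j k) ^ 2)) :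
    r ≤ triNormSq θb X :=
  le_csInf ⟨_, n, X, 1, by simpa using rank_le_width X, by simp, rfl⟩ <| by
    rintro t ⟨d, U, V, -, hUV, rfl⟩
    exact h d U V hUV

end triNormSq

lemma mul_le_sq_div_add_sq {σ r κ : ℝ} (hκ : 0 < κ) : σ * r ≤ σ ^ 2 / (2 * κ) + κ / 2 * r ^ 2 := by
  have : σ ^ 2 / (2 * κ) + κ / 2 * r ^ 2 - σ * r = (σ - κ * r) ^ 2 / (2 * κ) := by
    field_simp; ring
  have : 0 ≤ (σ - κ * r) ^ 2 / (2 * κ) := by positivity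
  linarith

section conjugate

variable {θb : ℝ} {m n : ℕ}

lemma frobenius_sub_half_triNormSq_le (h0 : 0 < θb) (h1 : θb < 1)
    (Q X : Matrix (Fin m) (Fin n) ℝ) :
    ∑ i, ∑ j, Q i j * X i j - 1 / 2 * triNormSq θb X ≤ θb / (1 - θb) * sigmaMax Q ^ 2 / 2 := by
  set σ := sigmaMax Q
  set c := (1 - θb) / θb
  have hc : 0 < c := div_pos (by linarith) h0
  have hθ : θb / (1 - θb) = c⁻¹ := (inv_div _ _).symm
  suffices h : ∀ (d : ℕ) (U : Matrix (Fin m) (Fin d) ℝ) (V : Matrix (Fin n) (Fin d) ℝ),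
      ∑ i, ∑ j, Q i j * (U * Vᵀ) i j ≤
        σ ^ 2 / (2 * c) + d * c / 2 * ∑ k, (∑ i, (U i k) ^ 2) * (∑ j, (V j k) ^ 2) by
    have := le_triNormSq (θb := θb) (X := X)
      (r := 2 * (∑ i, ∑ j, Q i j * X i j - σ ^ 2 / (2 * c))) <| by
        rintro d U V rfl
        have := h d U V
        rw [mul_div_assoc]
        linarith
    rw [hθ]
    field_simp at this ⊢
    linarith
  intro d U V
  -- AM-GM with weight `c d`, so that the `d` constant terms add up to `σ² / 2c`
  have hcol : ∀ k : Fin d, ∑ i, ∑ j, U i k * Q i j * V j k ≤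
      σ ^ 2 / (2 * (c * d)) + c * d / 2 * ((∑ i, (U i k) ^ 2) * (∑ j, (V j k) ^ 2)) := by
    intro k
    have hκ : 0 < c * d := mul_pos hc (Nat.cast_pos.2 k.pos)
    have hamgm := mul_le_sq_div_add_sq (σ := σ)
      (r := √(∑ i, (U i k) ^ 2) * √(∑ j, (V j k) ^ 2)) hκ
    rw [mul_pow, Real.sq_sqrt (by positivity), Real.sq_sqrt (by positivity), ← mul_assoc] at hamgm
    exact (bilin_le_sigmaMax_mul_sqrt Q (fun i => U i k) (fun j => V j k)).trans hamgm
  have hconst : (d : ℝ) * (σ ^ 2 / (2 * (c * d))) ≤ σ ^ 2 / (2 * c) := by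
    rcases Nat.eq_zero_or_pos d with rfl | hd
    · rw [Nat.cast_zero, zero_mul]
      positivity
    · have : (d : ℝ) ≠ 0 := by positivity
      exact le_of_eq (by field_simp)
  calc ∑ i, ∑ j, Q i j * (U * Vᵀ) i j = ∑ k, ∑ i, ∑ j, U i k * Q i j * V j k :=
        frobenius_mul_transpose Q U V
    _ ≤ ∑ k : Fin d, (σ ^ 2 / (2 * (c * d)) + c * d / 2 * ((∑ i, (U i k) ^ 2) * (∑ j, (V j k) ^ 2))) :=
        Finset.sum_le_sum fun k _ => hcol k
    _ ≤ _ := by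
        rw [Finset.sum_add_distrib, ← Finset.mul_sum]
        simp only [Finset.sum_const, Finset.card_univ, Fintype.card_fin, nsmul_eq_mul]
        linarith

lemma half_sq_bilin_le_fenchel (h0 : 0 < θb) (h1 : θb < 1) (Q : Matrix (Fin m) (Fin n) ℝ)
    {u : Fin m → ℝ} {v : Fin n → ℝ} (hu : ∑ i, u i ^ 2 ≤ 1) (hv : ∑ j, v j ^ 2 ≤ 1) :
    θb / (1 - θb) * (∑ i, ∑ j, u i * Q i j * v j) ^ 2 / 2 ≤
      fenchel (fun X => 1 / 2 * triNormSq θb X) Q := by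
  set s := ∑ i, ∑ j, u i * Q i j * v j
  set c := (1 - θb) / θb
  have hc : 0 < c := div_pos (by linarith) h0
  -- `t = s / c` maximizes `t s - c t² / 2`
  set t := s / c
  set U := replicateCol (Fin 1) (t • u)
  set V := replicateCol (Fin 1) v
  have hpair : ∑ i, ∑ j, Q i j * (U * Vᵀ) i j = t * s := by
    rw [frobenius_mul_transpose]
    simp [U, V, s, Finset.mul_sum, mul_assoc]
  have htri : triNormSq θb (U * Vᵀ) ≤ c * t ^ 2 := by
    refine (triNormSq_mul_transpose_le h0.le h1.le U V).trans ?_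
    simp only [U, V, replicateCol_apply, Pi.smul_apply, smul_eq_mul, mul_pow, ← Finset.mul_sum,
      Fin.sum_univ_one, Nat.cast_one, one_mul]
    have hpq : (∑ i, u i ^ 2) * ∑ j, v j ^ 2 ≤ 1 := mul_le_one₀ hu (by positivity) hv
    nlinarith [mul_le_mul_of_nonneg_left hpq (by positivity : 0 ≤ c * t ^ 2)]
  refine le_trans ?_ (le_fenchel (frobenius_sub_half_triNormSq_le h0 h1 Q) (U * Vᵀ))
  have hvalue : θb / (1 - θb) * s ^ 2 / 2 = t * s - 1 / 2 * (c * t ^ 2) := by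
    simp only [t, c]
    field_simp
    ring
  linarith

end conjugate

/-- The Fenchel conjugate of `Θ(X) = (1/2)‖X‖_△²` is
`Θ*(Q) = (θ̄/(1-θ̄)) σ_max(Q)² / 2`. -/
theorem fenchel_triNormSq (θb : ℝ) (h0 : 0 < θb) (h1 : θb < 1) {m n : ℕ}
    (Q : Matrix (Fin m) (Fin n) ℝ) :
    fenchel (fun X => (1 / 2) * triNormSq θb X) Q =
      (θb / (1 - θb)) * (sigmaMax Q) ^ 2 / 2 := by
  refine le_antisymm (fenchel_le (frobenius_sub_half_triNormSq_le h0 h1 Q)) ?_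
  set F := fenchel (fun X => 1 / 2 * triNormSq θb X) Q
  have hκ : 0 < θb / (1 - θb) := div_pos h0 (by linarith)
  have hF : 0 ≤ F := by
    convert half_sq_bilin_le_fenchel h0 h1 Q (u := 0) (v := 0) (by simp) (by simp) using 1
    simp
  have hσ : sigmaMax Q ≤ √(2 * F / (θb / (1 - θb))) := by
    refine sigmaMax_le Q fun u v hu hv => (le_abs_self _).trans (Real.abs_le_sqrt ?_)
    rw [le_div_iff₀ hκ]
    linarith [half_sq_bilin_le_fenchel h0 h1 Q hu hv]
  rw [Real.le_sqrt (sigmaMax_nonneg Q) (by positivity), le_div_iff₀ hκ] at hσ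
  linarith
end

section
/- Let X be an m×n real matrix with singular value decomposition X = L Σ Rᵀ and λ > 0. Let σ̄_d(X) be the average of the top d singular values of X, let d be the largest integer such that σ_d(X) > (λd/(1+λd)) σ̄_d(X), and set μ = (λd/(1+λd)) σ̄_d(X). Then Y = L S_μ(Σ) Rᵀ is the unique minimizer over Y of ‖X − Y‖_F² + λ‖Y‖_⋆², where S_μ soft-thresholds the singular values at level μ. -/
/-!
Write `F(Z) = ‖X - Z‖_F² + λ‖Z‖⋆²` and `D = X - Y`. By the duality `tr(Cᵀ W) ≤ ‖C‖_op ‖W‖⋆`,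
the two conditions `‖D‖_op ≤ λ‖Y‖⋆` and `tr(Dᵀ Y) = λ‖Y‖⋆²` make `D` equal to `λ‖Y‖⋆` times a
subgradient of the nuclear norm at `Y`; expanding the square and using convexity of `t ↦ λt²`
then gives `F(Z) ≥ F(Y) + ‖Z - Y‖_F²`, which is minimality and uniqueness at once.

For `Y = L S_μ(Σ) Rᵀ` both conditions reduce, by orthogonal invariance, to the diagonal, where
`σᵢ - (σᵢ - μ)₊ = min(σᵢ, μ)` lies in `[0, μ]` and equals `μ` wherever `(σᵢ - μ)₊ > 0`. So they
hold as soon as `μ = λ ∑ᵢ (σᵢ - μ)₊`, and the choice of `d` is exactly what makes `μ` this fixed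
point: `σᵢ > μ` for `i < d`, and the maximality of `d` gives `σᵢ ≤ μ` for `i ≥ d`.
-/

open Matrix Finset

/-- The nuclear norm of a real matrix: the sum of its singular values, i.e. the sum
of the square roots of the eigenvalues of `Xᵀ X`. -/
noncomputable def nuclearNorm {m n : ℕ} (X : Matrix (Fin m) (Fin n) ℝ) : ℝ :=
  ∑ j, Real.sqrt ((Matrix.isHermitian_conjTranspose_mul_self X).eigenvalues j)

open scoped Matrix.Norms.L2Operator

section Orthogonal

variable {α ι κ ι' : Type*} [Fintype ι] [Fintype κ] [Fintype ι']

lemma trace_transpose_mul_eq_sum [NonUnitalNonAssocSemiring α] (A B : Matrix ι κ α) :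
    trace (Aᵀ * B) = ∑ i, ∑ j, A i j * B i j := by
  simp only [trace, Matrix.diag, mul_apply, transpose_apply]
  exact sum_comm

lemma trace_transpose_mul_conj [CommRing α] [DecidableEq κ] [DecidableEq ι]
    {L : Matrix ι' ι α} {R : Matrix κ κ α} (hL : Lᵀ * L = 1) (hR : Rᵀ * R = 1)
    (A B : Matrix ι κ α) :
    trace ((L * A * Rᵀ)ᵀ * (L * B * Rᵀ)) = trace (Aᵀ * B) := by
  simp only [transpose_mul, transpose_transpose, Matrix.mul_assoc]
  rw [← Matrix.mul_assoc Lᵀ, hL, Matrix.one_mul, trace_mul_comm, Matrix.mul_assoc,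
    Matrix.mul_assoc, hR, Matrix.mul_one]

lemma sum_comp_eigenvalues_of_eq_diagonal [DecidableEq ι] {A : Matrix ι ι ℝ}
    (hA : A.IsHermitian) {v : ι → ℝ} (h : A = diagonal v) (f : ℝ → ℝ) :
    ∑ i, f (hA.eigenvalues i) = ∑ i, f (v i) := by
  have hroots : univ.val.map hA.eigenvalues = univ.val.map v := by
    have hchar :
        A.charpoly = ((univ.val.map v).map fun a => Polynomial.X - Polynomial.C a).prod := by
      rw [h, charpoly_diagonal, Multiset.map_map]
      rfl
    have := hA.roots_charpoly_eq_eigenvalues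
    rw [hchar, Polynomial.roots_multiset_prod_X_sub_C] at this
    simpa using this.symm
  simpa only [sum_eq_multiset_sum, Multiset.map_map, Function.comp_def] using
    congr_arg (fun s => (s.map f).sum) hroots

lemma l2_opNorm_le_one_of_transpose_mul_self [DecidableEq ι] {L : Matrix ι' ι ℝ}
    (hL : Lᵀ * L = 1) : ‖L‖ ≤ 1 := by
  have h : ‖L‖ * ‖L‖ ≤ 1 := by
    rw [← l2_opNorm_conjTranspose_mul_self, conjTranspose_eq_transpose_of_trivial, hL,
      ← diagonal_one, l2_opNorm_diagonal]
    exact (pi_norm_le_iff_of_nonneg zero_le_one).2 fun _ => by simp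
  nlinarith [norm_nonneg L]

lemma l2_opNorm_mul_mul_transpose_le [DecidableEq ι] [DecidableEq κ]
    {L : Matrix ι' ι ℝ} {R : Matrix κ κ ℝ} (hL : Lᵀ * L = 1) (hR : Rᵀ * R = 1)
    (W : Matrix ι κ ℝ) : ‖L * W * Rᵀ‖ ≤ ‖W‖ := by
  have hRt : ‖Rᵀ‖ ≤ 1 := by
    rw [← conjTranspose_eq_transpose_of_trivial, l2_opNorm_conjTranspose]
    exact l2_opNorm_le_one_of_transpose_mul_self hR
  calc ‖L * W * Rᵀ‖ ≤ ‖L‖ * ‖W‖ * ‖Rᵀ‖ :=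
        (l2_opNorm_mul _ _).trans (by gcongr; exact l2_opNorm_mul _ _)
    _ ≤ 1 * ‖W‖ * 1 := by
        gcongr
        exact l2_opNorm_le_one_of_transpose_mul_self hL
    _ = ‖W‖ := by ring

end Orthogonal

section NuclearNorm

variable {m n : ℕ}

lemma nuclearNorm_nonneg (W : Matrix (Fin m) (Fin n) ℝ) : 0 ≤ nuclearNorm W :=
  sum_nonneg fun _ _ => Real.sqrt_nonneg _

lemma nuclearNorm_eq_of_charpoly_eq {m' : ℕ} {W : Matrix (Fin m) (Fin n) ℝ}
    {V : Matrix (Fin m') (Fin n) ℝ} (h : (Wᴴ * W).charpoly = (Vᴴ * V).charpoly) :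
    nuclearNorm W = nuclearNorm V := by
  unfold nuclearNorm
  rw [((isHermitian_conjTranspose_mul_self W).eigenvalues_eq_eigenvalues_iff
    (isHermitian_conjTranspose_mul_self V)).2 h]

lemma nuclearNorm_mul_mul_transpose {m' : ℕ} {L : Matrix (Fin m') (Fin m) ℝ}
    {R : Matrix (Fin n) (Fin n) ℝ} (hL : Lᵀ * L = 1) (hR : Rᵀ * R = 1)
    (W : Matrix (Fin m) (Fin n) ℝ) : nuclearNorm (L * W * Rᵀ) = nuclearNorm W := by
  apply nuclearNorm_eq_of_charpoly_eq
  have hconj : (L * W * Rᵀ)ᴴ * (L * W * Rᵀ) = R * (Wᴴ * W * Rᵀ) := by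
    simp only [conjTranspose_eq_transpose_of_trivial, transpose_mul, transpose_transpose,
      Matrix.mul_assoc]
    rw [← Matrix.mul_assoc Lᵀ, hL, Matrix.one_mul]
  rw [hconj, charpoly_mul_comm, Matrix.mul_assoc, hR, Matrix.mul_one]

/-- Expanding `Cᵀ W` in an orthonormal eigenbasis `(vₖ)` of `Wᵀ W` gives `∑ₖ ⟪C vₖ, W vₖ⟫`,
and `‖W vₖ‖` is the `k`-th singular value. -/
lemma trace_transpose_mul_le_opNorm_mul_nuclearNorm (C W : Matrix (Fin m) (Fin n) ℝ) :
    trace (Cᵀ * W) ≤ ‖C‖ * nuclearNorm W := by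
  set hG := isHermitian_conjTranspose_mul_self W
  set b := hG.eigenvectorBasis
  set V : Matrix (Fin n) (Fin n) ℝ := ↑hG.eigenvectorUnitary
  have hV : V * Vᵀ = 1 := by
    rw [← conjTranspose_eq_transpose_of_trivial, ← star_eq_conjTranspose]
    exact Unitary.mul_star_self_of_mem hG.eigenvectorUnitary.2
  have htr : trace (Cᵀ * W) = ∑ k, (C *ᵥ b k) ⬝ᵥ (W *ᵥ b k) := by
    rw [← Matrix.mul_one (Cᵀ * W), ← hV, ← Matrix.mul_assoc, trace_mul_comm,
      show Vᵀ * (Cᵀ * W * V) = (C * V)ᵀ * (W * V) by simp only [transpose_mul, Matrix.mul_assoc],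
      trace_transpose_mul_eq_sum, sum_comm]
    rfl
  have hWb : ∀ k, ‖WithLp.toLp 2 (W *ᵥ b k)‖ = √(hG.eigenvalues k) := by
    intro k
    have hε : hG.eigenvalues k = (W *ᵥ b k) ⬝ᵥ (W *ᵥ b k) := by
      calc hG.eigenvalues k = (b k : Fin n → ℝ) ⬝ᵥ ((Wᵀ * W) *ᵥ b k) := hG.eigenvalues_eq k
        _ = _ := by rw [← mulVec_mulVec, dotProduct_mulVec, vecMul_transpose]
    rw [hε, EuclideanSpace.norm_eq]
    simp [dotProduct, sq]
  rw [htr, nuclearNorm, mul_sum]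
  refine sum_le_sum fun k _ => ?_
  calc (C *ᵥ b k) ⬝ᵥ (W *ᵥ b k)
      = inner ℝ (WithLp.toLp 2 (C *ᵥ b k)) (WithLp.toLp 2 (W *ᵥ b k)) := by
        simp [EuclideanSpace.inner_eq_star_dotProduct, dotProduct_comm]
    _ ≤ ‖WithLp.toLp 2 (C *ᵥ b k)‖ * ‖WithLp.toLp 2 (W *ᵥ b k)‖ := real_inner_le_norm _ _
    _ ≤ ‖C‖ * √(hG.eigenvalues k) := by
        rw [hWb]
        gcongr
        simpa [b.norm_eq_one] using l2_opNorm_mulVec C (b k)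

end NuclearNorm

section RectDiagonal

variable {m n : ℕ}

def rectDiagonal (m n : ℕ) (v : ℕ → ℝ) : Matrix (Fin m) (Fin n) ℝ :=
  fun i j => if i.1 = j.1 then v i else 0

lemma rectDiagonal_sub (a b : ℕ → ℝ) :
    rectDiagonal m n a - rectDiagonal m n b = rectDiagonal m n (a - b) := by
  ext i j
  by_cases h : i.1 = j.1 <;> simp [rectDiagonal, h]

lemma transpose_rectDiagonal_mul_rectDiagonal (a b : ℕ → ℝ) :
    (rectDiagonal m n a)ᵀ * rectDiagonal m n b =
      diagonal fun j : Fin n => if j.1 < m then a j * b j else 0 := by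
  ext j k
  simp only [mul_apply, transpose_apply, rectDiagonal, diagonal_apply, Fin.ext_iff]
  rw [Fin.sum_univ_eq_sum_range
    (fun i => (if i = j.1 then a i else 0) * if i = k.1 then b i else 0)]
  by_cases hjk : j.1 = k.1 <;> simp [hjk, ite_mul, mul_ite, eq_comm]

lemma sum_ite_val_lt (f : ℕ → ℝ) :
    ∑ j : Fin n, (if j.1 < m then f j else 0) = ∑ i ∈ range (min m n), f i := by
  rw [Fin.sum_univ_eq_sum_range (fun j => if j < m then f j else 0), ← sum_filter]
  congr 1
  ext i
  simp [and_comm]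

lemma trace_transpose_rectDiagonal_mul_rectDiagonal (a b : ℕ → ℝ) :
    trace ((rectDiagonal m n a)ᵀ * rectDiagonal m n b) = ∑ i ∈ range (min m n), a i * b i := by
  rw [transpose_rectDiagonal_mul_rectDiagonal, trace_diagonal]
  exact sum_ite_val_lt fun i => a i * b i

lemma nuclearNorm_rectDiagonal {t : ℕ → ℝ} (ht : ∀ i < min m n, 0 ≤ t i) :
    nuclearNorm (rectDiagonal m n t) = ∑ i ∈ range (min m n), t i := by
  rw [nuclearNorm, sum_comp_eigenvalues_of_eq_diagonal _ (by
    rw [conjTranspose_eq_transpose_of_trivial, transpose_rectDiagonal_mul_rectDiagonal]),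
    ← sum_ite_val_lt]
  refine sum_congr rfl fun j _ => ?_
  split_ifs with hj
  · exact Real.sqrt_mul_self (ht j (Nat.lt_min.2 ⟨hj, j.2⟩))
  · exact Real.sqrt_zero

lemma l2_opNorm_rectDiagonal_le {v : ℕ → ℝ} {μ : ℝ} (hμ : 0 ≤ μ)
    (hv : ∀ i < min m n, |v i| ≤ μ) : ‖rectDiagonal m n v‖ ≤ μ := by
  rw [mul_self_le_mul_self_iff (norm_nonneg _) hμ, ← l2_opNorm_conjTranspose_mul_self,
    conjTranspose_eq_transpose_of_trivial, transpose_rectDiagonal_mul_rectDiagonal,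
    l2_opNorm_diagonal]
  refine (pi_norm_le_iff_of_nonneg (mul_self_nonneg μ)).2 fun j => ?_
  split_ifs with hj
  · rw [norm_mul, Real.norm_eq_abs]
    have := hv j (Nat.lt_min.2 ⟨hj, j.2⟩)
    exact mul_le_mul this this (abs_nonneg _) hμ
  · simpa using mul_self_nonneg μ

end RectDiagonal

section Prox

variable {m n : ℕ}

noncomputable def proxObjective (lam : ℝ) (X Z : Matrix (Fin m) (Fin n) ℝ) : ℝ :=
  ∑ i, ∑ j, ((X - Z) i j) ^ 2 + lam * nuclearNorm Z ^ 2

lemma proxObjective_add_le {lam : ℝ} (hlam : 0 ≤ lam) {X Y : Matrix (Fin m) (Fin n) ℝ}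
    (hop : ‖X - Y‖ ≤ lam * nuclearNorm Y)
    (htr : trace ((X - Y)ᵀ * Y) = lam * nuclearNorm Y ^ 2) (Z : Matrix (Fin m) (Fin n) ℝ) :
    proxObjective lam X Y + ∑ i, ∑ j, ((Z - Y) i j) ^ 2 ≤ proxObjective lam X Z := by
  have hexp : ∑ i, ∑ j, ((X - Z) i j) ^ 2 = ∑ i, ∑ j, ((X - Y) i j) ^ 2
      - 2 * trace ((X - Y)ᵀ * (Z - Y)) + ∑ i, ∑ j, ((Z - Y) i j) ^ 2 := by
    rw [trace_transpose_mul_eq_sum, mul_sum, ← sum_sub_distrib, ← sum_add_distrib]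
    refine sum_congr rfl fun i _ => ?_
    rw [mul_sum, ← sum_sub_distrib, ← sum_add_distrib]
    refine sum_congr rfl fun j _ => ?_
    simp only [Matrix.sub_apply]
    ring
  have hdual : trace ((X - Y)ᵀ * Z) ≤ lam * nuclearNorm Y * nuclearNorm Z :=
    (trace_transpose_mul_le_opNorm_mul_nuclearNorm _ _).trans
      (mul_le_mul_of_nonneg_right hop (nuclearNorm_nonneg Z))
  rw [Matrix.mul_sub, trace_sub, htr] at hexp
  unfold proxObjective
  nlinarith [mul_nonneg hlam (sq_nonneg (nuclearNorm Z - nuclearNorm Y))]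

lemma proxObjective_add_le_of_softThreshold {L : Matrix (Fin m) (Fin m) ℝ}
    {R : Matrix (Fin n) (Fin n) ℝ} (hL : Lᵀ * L = 1) (hR : Rᵀ * R = 1) {lam μ : ℝ}
    (hlam : 0 ≤ lam) {σ : ℕ → ℝ} (hσ : ∀ i < min m n, 0 ≤ σ i)
    (hμ : lam * ∑ i ∈ range (min m n), max (σ i - μ) 0 = μ) (Z : Matrix (Fin m) (Fin n) ℝ) :
    proxObjective lam (L * rectDiagonal m n σ * Rᵀ)
        (L * rectDiagonal m n (fun i => max (σ i - μ) 0) * Rᵀ) +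
      ∑ i, ∑ j, ((Z - L * rectDiagonal m n (fun i => max (σ i - μ) 0) * Rᵀ) i j) ^ 2 ≤
      proxObjective lam (L * rectDiagonal m n σ * Rᵀ) Z := by
  set t : ℕ → ℝ := fun i => max (σ i - μ) 0
  have hnorm : nuclearNorm (L * rectDiagonal m n t * Rᵀ) = ∑ i ∈ range (min m n), t i := by
    rw [nuclearNorm_mul_mul_transpose hL hR, nuclearNorm_rectDiagonal fun i _ => le_max_right _ _]
  have hμ0 : 0 ≤ μ := hμ ▸ mul_nonneg hlam (sum_nonneg fun i _ => le_max_right _ _)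
  have hsub : L * rectDiagonal m n σ * Rᵀ - L * rectDiagonal m n t * Rᵀ =
      L * rectDiagonal m n (σ - t) * Rᵀ := by
    rw [← rectDiagonal_sub, Matrix.mul_sub, Matrix.sub_mul]
  have hgap : ∀ i, σ i - t i = min (σ i) μ := fun i => by
    rcases le_total (σ i) μ with h | h <;> simp [t, h]
  apply proxObjective_add_le hlam
  · rw [hsub, hnorm, hμ]
    refine (l2_opNorm_mul_mul_transpose_le hL hR _).trans
      (l2_opNorm_rectDiagonal_le hμ0 fun i hi => ?_)
    rw [Pi.sub_apply, hgap, abs_of_nonneg (le_min (hσ i hi) hμ0)]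
    exact min_le_right _ _
  · rw [hsub, trace_transpose_mul_conj hL hR, trace_transpose_rectDiagonal_mul_rectDiagonal, hnorm,
      sq, ← mul_assoc, hμ, mul_sum]
    refine sum_congr rfl fun i _ => ?_
    rw [Pi.sub_apply, hgap]
    rcases le_total (σ i) μ with h | h
    · simp [t, max_eq_right (sub_nonpos.2 h)]
    · rw [min_eq_right h]

lemma forall_le_and_unique_of_add_sum_sq_le_s16 {F : Matrix (Fin m) (Fin n) ℝ → ℝ}
    {Y : Matrix (Fin m) (Fin n) ℝ} (h : ∀ Z, F Y + ∑ i, ∑ j, ((Z - Y) i j) ^ 2 ≤ F Z) :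
    (∀ Z, F Y ≤ F Z) ∧ ∀ Z, (∀ W, F Z ≤ F W) → Z = Y := by
  have hsq : ∀ Z : Matrix (Fin m) (Fin n) ℝ, 0 ≤ ∑ i, ∑ j, ((Z - Y) i j) ^ 2 :=
    fun Z => sum_nonneg fun i _ => sum_nonneg fun j _ => sq_nonneg _
  refine ⟨fun Z => (le_add_of_nonneg_right (hsq Z)).trans (h Z), fun Z hZ => ?_⟩
  have h0 : ∑ i, ∑ j, ((Z - Y) i j) ^ 2 = 0 := le_antisymm (by linarith [h Z, hZ Y]) (hsq Z)
  ext i j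
  have hrow := (sum_eq_zero_iff_of_nonneg fun i _ => sum_nonneg fun j _ =>
    sq_nonneg ((Z - Y) i j)).1 h0 i (mem_univ i)
  have hij := (sum_eq_zero_iff_of_nonneg fun j _ => sq_nonneg _).1 hrow j (mem_univ j)
  simpa [sub_eq_zero] using hij

end Prox

section ThresholdLevel

noncomputable def thresholdLevel (lam : ℝ) (σ : ℕ → ℝ) (k : ℕ) : ℝ :=
  lam * k / (1 + lam * k) * ((∑ i ∈ range k, σ i) / k)

variable {lam : ℝ} {σ : ℕ → ℝ}

lemma thresholdLevel_mul (hlam : 0 ≤ lam) {k : ℕ} (hk : k ≠ 0) :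
    thresholdLevel lam σ k * (1 + lam * k) = lam * ∑ i ∈ range k, σ i := by
  have : 1 + lam * k ≠ 0 := by positivity
  unfold thresholdLevel
  field_simp

/-- The invariant `lam * ∑_{j<i} σ j ≤ μ (1 + lam * i)`, an equality at `i = d`, propagates
from `i` to `i + 1` because the maximality of `d` at `e = i + 1` forces `σ i ≤ μ`. -/
lemma le_thresholdLevel_of_forall_not_lt (hlam : 0 ≤ lam) {d K : ℕ} (hd : d ≠ 0)
    (hmax : ∀ e, d < e → e ≤ K → ¬ thresholdLevel lam σ e < σ (e - 1)) :
    ∀ i, d ≤ i → i < K → σ i ≤ thresholdLevel lam σ d := by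
  set μ := thresholdLevel lam σ d
  have hstep : ∀ i, d ≤ i → i < K → lam * ∑ j ∈ range i, σ j ≤ μ * (1 + lam * i) →
      σ i ≤ μ := by
    intro i hdi hiK hP
    have h : σ i * (1 + lam * (i + 1 : ℕ)) ≤ lam * ∑ j ∈ range (i + 1), σ j := by
      rw [← thresholdLevel_mul hlam i.succ_ne_zero]
      exact mul_le_mul_of_nonneg_right (not_lt.1 (hmax (i + 1) (by omega) hiK)) (by positivity)
    rw [sum_range_succ] at h
    push_cast at h
    exact le_of_mul_le_mul_right (by linarith) (by positivity : 0 < 1 + lam * i)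
  have hbound : ∀ i, d ≤ i → i ≤ K → lam * ∑ j ∈ range i, σ j ≤ μ * (1 + lam * i) := by
    intro i hdi
    induction i, hdi using Nat.le_induction with
    | base => exact fun _ => (thresholdLevel_mul hlam hd).ge
    | succ i hdi ih =>
      intro hiK
      have hP := ih (by omega)
      have hσi := mul_le_mul_of_nonneg_left (hstep i hdi hiK hP) hlam
      rw [sum_range_succ]
      push_cast
      linarith
  exact fun i hdi hiK => hstep i hdi hiK (hbound i hdi hiK.le)

lemma mul_sum_max_sub_thresholdLevel (hlam : 0 < lam) {d K : ℕ} (hd : 1 ≤ d) (hdK : d ≤ K)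
    (hmono : ∀ i j, i ≤ j → j < K → σ j ≤ σ i)
    (hcond : thresholdLevel lam σ d < σ (d - 1))
    (hmax : ∀ e, d < e → e ≤ K → ¬ thresholdLevel lam σ e < σ (e - 1)) :
    lam * ∑ i ∈ range K, max (σ i - thresholdLevel lam σ d) 0 = thresholdLevel lam σ d := by
  set μ := thresholdLevel lam σ d
  have hle := le_thresholdLevel_of_forall_not_lt hlam.le (by omega) hmax
  have hlt : ∀ i < d, μ < σ i := fun i hi => hcond.trans_le (hmono i (d - 1) (by omega) (by omega))
  rw [← sum_range_add_sum_Ico _ hdK,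
    sum_congr rfl fun i hi => max_eq_left (sub_nonneg.2 (hlt i (mem_range.1 hi)).le),
    sum_eq_zero fun i hi => max_eq_right (sub_nonpos.2 (hle i (mem_Ico.1 hi).1 (mem_Ico.1 hi).2)),
    add_zero, sum_sub_distrib, sum_const, card_range, nsmul_eq_mul]
  linear_combination -(thresholdLevel_mul hlam.le (by omega : d ≠ 0))

end ThresholdLevel

/-- Closed-form solution of `min_Y ‖X - Y‖_F² + λ‖Y‖_⋆²`: if `X = L S Rᵀ` is an SVD
of `X` with nonincreasing nonnegative singular values `σ`, `σ̄_d` the average of the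
top `d` singular values, `d` the largest integer with `σ_d > (λd/(1+λd)) σ̄_d`, and
`μ = (λd/(1+λd)) σ̄_d`, then `Y = L S_μ Rᵀ` (soft-thresholding the singular values
at level `μ`) is the unique minimizer. -/
theorem nuclear_norm_squared_prox {m n : ℕ} (lam : ℝ) (hlam : 0 < lam)
    (X : Matrix (Fin m) (Fin n) ℝ)
    (L : Matrix (Fin m) (Fin m) ℝ) (R : Matrix (Fin n) (Fin n) ℝ)
    (hL : Lᵀ * L = 1) (hR : Rᵀ * R = 1)
    (σ : ℕ → ℝ)
    (hσpos : ∀ i, i < min m n → 0 ≤ σ i)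
    (hσmono : ∀ i j : ℕ, i ≤ j → j < min m n → σ j ≤ σ i)
    (S : Matrix (Fin m) (Fin n) ℝ)
    (hS : ∀ i j, S i j = if i.1 = j.1 then σ i.1 else 0)
    (hX : X = L * S * Rᵀ)
    (σbar : ℕ → ℝ) (hσbar : ∀ k : ℕ, σbar k = (∑ i ∈ range k, σ i) / k)
    (d : ℕ) (hd1 : 1 ≤ d) (hd2 : d ≤ min m n)
    (hcond : lam * d / (1 + lam * d) * σbar d < σ (d - 1))
    (hmax : ∀ e : ℕ, d < e → e ≤ min m n →
      ¬ (lam * e / (1 + lam * e) * σbar e < σ (e - 1)))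
    (μ : ℝ) (hμ : μ = lam * d / (1 + lam * d) * σbar d)
    (Sμ : Matrix (Fin m) (Fin n) ℝ)
    (hSμ : ∀ i j, Sμ i j = if i.1 = j.1 then max (σ i.1 - μ) 0 else 0)
    (Y : Matrix (Fin m) (Fin n) ℝ) (hY : Y = L * Sμ * Rᵀ) :
    (∀ Z : Matrix (Fin m) (Fin n) ℝ,
        (∑ i, ∑ j, ((X - Y) i j) ^ 2) + lam * (nuclearNorm Y) ^ 2 ≤
          (∑ i, ∑ j, ((X - Z) i j) ^ 2) + lam * (nuclearNorm Z) ^ 2) ∧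
      ∀ Z : Matrix (Fin m) (Fin n) ℝ,
        (∀ W : Matrix (Fin m) (Fin n) ℝ,
            (∑ i, ∑ j, ((X - Z) i j) ^ 2) + lam * (nuclearNorm Z) ^ 2 ≤
              (∑ i, ∑ j, ((X - W) i j) ^ 2) + lam * (nuclearNorm W) ^ 2) →
          Z = Y := by
  obtain rfl : σbar = fun k => (∑ i ∈ range k, σ i) / k := funext hσbar
  have hfix : lam * ∑ i ∈ range (min m n), max (σ i - μ) 0 = μ := by
    subst hμ
    exact mul_sum_max_sub_thresholdLevel hlam hd1 hd2 hσmono hcond hmax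
  have hSdiag : S = rectDiagonal m n σ := by ext i j; exact hS i j
  have hSμdiag : Sμ = rectDiagonal m n fun i => max (σ i - μ) 0 := by ext i j; exact hSμ i j
  subst hX hY hSdiag hSμdiag
  exact forall_le_and_unique_of_add_sum_sq_le_s16
    (proxObjective_add_le_of_softThreshold hL hR hlam.le hσpos hfix)
end
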